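/- Let N ≥ 2, M ≥ 1, τ ∈ ℝ, A := !![1, τ; 0, 1], β := ![τ²/2, τ] (2×1), B := ![τ, 1] (2×1), J := [0_{(N−M)×M}; I_M] ∈ Matrix (Fin N) (Fin M) ℝ, and let V, W, q, V⁺ satisfy ker V = span{1_N}, W of full column rank, qᵀW = 0, qᵀ1_N = 1, V⁺ := W(VW)⁻¹. Then for all x ∈ ℝ^{2N}, z ∈ ℝᴹ, φ ∈ ℝ^{N−1} and v ∈ ℝ^{2N}: (I₂⊗qᵀ)·((A⊗I_N)x + (β⊗J)z + (B⊗I_N)(V⁺φ) + v) = A·((I₂⊗qᵀ)x) + (β⊗(qᵀJ))z + (I₂⊗qᵀ)v. In particular (B⊗qᵀ)·V⁺ = 0, so the control input u = V⁺φ has no effect on the unobservable component η_ō = (I₂⊗qᵀ)x. -/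

import Mathlib

open Matrix Kronecker

/-!
Since `qᵀ W = 0`, also `qᵀ V⁺ = qᵀ W (V W)⁻¹ = 0`. By the mixed-product rule
`(I₂ ⊗ qᵀ)(X ⊗ Y) = X ⊗ qᵀY`, projecting the closed-loop dynamics with `I₂ ⊗ qᵀ` turns the
control term into `(B ⊗ qᵀ)V⁺φ = (B ⊗ qᵀV⁺)φ = 0`, while the drift `A ⊗ I_N` becomes
`A ⊗ qᵀ = A (I₂ ⊗ qᵀ)`.
-/

namespace Matrix

variable {α ι l m n p k : Type*}

theorem kronecker_one_of_subsingleton [MulZeroOneClass α] [Subsingleton ι] [DecidableEq ι]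
    (A : Matrix l m α) : A ⊗ₖ (1 : Matrix ι ι α) = A.submatrix Prod.fst Prod.fst := by
  ext ⟨i, s⟩ ⟨j, t⟩
  simp [Subsingleton.elim s t]

variable [CommSemiring α]

theorem one_kronecker_mul_kronecker [Fintype l] [Fintype n] [DecidableEq l]
    (r : Matrix k n α) (A : Matrix l m α) (X : Matrix n p α) :
    (1 : Matrix l l α) ⊗ₖ r * A ⊗ₖ X = A ⊗ₖ (r * X) := by
  rw [← mul_kronecker_mul, Matrix.one_mul]

theorem kronecker_mul_one_kronecker [Fintype m] [Fintype n] [DecidableEq m]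
    (A : Matrix l m α) (X : Matrix k n α) (r : Matrix n p α) :
    A ⊗ₖ X * (1 : Matrix m m α) ⊗ₖ r = A ⊗ₖ (X * r) := by
  rw [← mul_kronecker_mul, Matrix.mul_one]

theorem mul_submatrix_id [Fintype m] (P : Matrix l m α) (X : Matrix m n α) (g : p → n) :
    P * X.submatrix id g = (P * X).submatrix id g := by
  simpa using (submatrix_mul P X id id g Function.bijective_id).symm

theorem kronecker_submatrix_mul [Fintype n]
    (b : Matrix l ι α) (r : Matrix k n α) (i₀ : ι) (Y : Matrix n p α) :
    (b ⊗ₖ r).submatrix id (fun j => (i₀, j)) * Y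
      = (b ⊗ₖ (r * Y)).submatrix id (fun j => (i₀, j)) := by
  ext ⟨i, s⟩ j
  simp [mul_apply, Finset.mul_sum, mul_assoc]

end Matrix

theorem stmt_17_general (N M : ℕ)
    (A : Matrix (Fin 2) (Fin 2) ℝ)
    (β : Matrix (Fin 2) (Fin 1) ℝ)
    (B : Matrix (Fin 2) (Fin 1) ℝ)
    (J : Matrix (Fin N) (Fin M) ℝ)
    (V : Matrix (Fin (N-1)) (Fin N) ℝ)
    (W : Matrix (Fin N) (Fin (N-1)) ℝ)
    (q : Fin N → ℝ) (hqW : Matrix.vecMul q W = 0)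
    (Vplus : Matrix (Fin N) (Fin (N-1)) ℝ) (hVplus : Vplus = W * (V * W)⁻¹)
    (qrow : Matrix (Fin 1) (Fin N) ℝ) (hqrow : qrow = Matrix.of (fun _ j => q j)) :
    (∀ (x : Fin 2 × Fin N → ℝ) (z : Fin M → ℝ) (φ : Fin (N-1) → ℝ)
        (v : Fin 2 × Fin N → ℝ),
      ((1 : Matrix (Fin 2) (Fin 2) ℝ) ⊗ₖ qrow) *ᵥ
        ((A ⊗ₖ (1 : Matrix (Fin N) (Fin N) ℝ)) *ᵥ x
          + ((β ⊗ₖ J).submatrix id (fun j : Fin M => ((0 : Fin 1), j))) *ᵥ z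
          + ((B ⊗ₖ (1 : Matrix (Fin N) (Fin N) ℝ)).submatrix id
              (fun i : Fin N => ((0 : Fin 1), i))) *ᵥ (Vplus *ᵥ φ)
          + v)
      = (A.submatrix Prod.fst Prod.fst) *ᵥ
          (((1 : Matrix (Fin 2) (Fin 2) ℝ) ⊗ₖ qrow) *ᵥ x)
        + ((β ⊗ₖ (qrow * J)).submatrix id (fun j : Fin M => ((0 : Fin 1), j))) *ᵥ z
        + ((1 : Matrix (Fin 2) (Fin 2) ℝ) ⊗ₖ qrow) *ᵥ v) ∧
    ((B ⊗ₖ qrow).submatrix id (fun i : Fin N => ((0 : Fin 1), i))) * Vplus = 0 := by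
  have hqVplus : qrow * Vplus = 0 := by
    have hqrow' : qrow = replicateRow (Fin 1) q := hqrow
    rw [hqrow', hVplus, ← Matrix.mul_assoc, ← replicateRow_vecMul, hqW, replicateRow_zero,
      Matrix.zero_mul]
  have hcontrol : (B ⊗ₖ qrow).submatrix id (fun i : Fin N => ((0 : Fin 1), i)) * Vplus = 0 := by
    rw [kronecker_submatrix_mul, hqVplus, kronecker_zero, submatrix_zero]
    rfl
  refine ⟨fun x z φ v => ?_, hcontrol⟩
  simp only [mulVec_add, mulVec_mulVec, ← Matrix.mul_assoc, mul_submatrix_id,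
    one_kronecker_mul_kronecker, Matrix.mul_one, hcontrol, zero_mulVec, add_zero]
  rw [← kronecker_one_of_subsingleton, kronecker_mul_one_kronecker, Matrix.one_mul]

/-- Equations (33) and (36) of the paper: under any control of the form `u = V⁺φ`, the
unobservable component `η_ō = (I₂ ⊗ qᵀ)x` evolves as the free-running weighted ensemble
mean, independently of the control; in particular `(B ⊗ qᵀ)V⁺ = 0`. -/
theorem stmt_17 (N M : ℕ) (hN : 2 ≤ N) (hM : 1 ≤ M) (τ : ℝ)
    (A : Matrix (Fin 2) (Fin 2) ℝ) (hA : A = !![1, τ; 0, 1])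
    (β : Matrix (Fin 2) (Fin 1) ℝ) (hβ : β = !![τ^2/2; τ])
    (B : Matrix (Fin 2) (Fin 1) ℝ) (hB : B = !![τ; 1])
    (J : Matrix (Fin N) (Fin M) ℝ)
    (hJ : J = Matrix.of (fun i j => if i.val = N - M + j.val then 1 else 0))
    (V : Matrix (Fin (N-1)) (Fin N) ℝ)
    (hV : LinearMap.ker V.mulVecLin = Submodule.span ℝ {(fun _ => 1 : Fin N → ℝ)})
    (W : Matrix (Fin N) (Fin (N-1)) ℝ)
    (hW : LinearIndependent ℝ (fun j : Fin (N-1) => fun i : Fin N => W i j))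
    (q : Fin N → ℝ) (hqW : Matrix.vecMul q W = 0)
    (hq1 : q ⬝ᵥ (fun _ => 1) = 1)
    (Vplus : Matrix (Fin N) (Fin (N-1)) ℝ) (hVplus : Vplus = W * (V * W)⁻¹)
    (qrow : Matrix (Fin 1) (Fin N) ℝ) (hqrow : qrow = Matrix.of (fun _ j => q j)) :
    (∀ (x : Fin 2 × Fin N → ℝ) (z : Fin M → ℝ) (φ : Fin (N-1) → ℝ)
        (v : Fin 2 × Fin N → ℝ),
      ((1 : Matrix (Fin 2) (Fin 2) ℝ) ⊗ₖ qrow) *ᵥ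
        ((A ⊗ₖ (1 : Matrix (Fin N) (Fin N) ℝ)) *ᵥ x
          + ((β ⊗ₖ J).submatrix id (fun j : Fin M => ((0 : Fin 1), j))) *ᵥ z
          + ((B ⊗ₖ (1 : Matrix (Fin N) (Fin N) ℝ)).submatrix id
              (fun i : Fin N => ((0 : Fin 1), i))) *ᵥ (Vplus *ᵥ φ)
          + v)
      = (A.submatrix Prod.fst Prod.fst) *ᵥ
          (((1 : Matrix (Fin 2) (Fin 2) ℝ) ⊗ₖ qrow) *ᵥ x)
        + ((β ⊗ₖ (qrow * J)).submatrix id (fun j : Fin M => ((0 : Fin 1), j))) *ᵥ z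
        + ((1 : Matrix (Fin 2) (Fin 2) ℝ) ⊗ₖ qrow) *ᵥ v) ∧
    ((B ⊗ₖ qrow).submatrix id (fun i : Fin N => ((0 : Fin 1), i))) * Vplus = 0 :=
  stmt_17_general N M A β B J V W q hqW Vplus hVplus qrow hqrow
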